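/- (Monotonicity and limiting behavior of the thresholding noise level.) Fix κ ∈ (0,1/2) and J ≥ 1, and define σ_J²(α) = ξ_J(α) / (ξ_J(1 − ακ/(1−κ)) − ξ_J(α)) for α ∈ (0, (1−κ)/κ·(1−κ))∩(0,1). Then σ_J²(α) is finite and strictly positive for each α ∈ (0,1) with 1 − ακ/(1−κ) > α, and σ_J²(α) → 0 as α → 0⁺; moreover, for small α, ξ_J(α) = Θ(α^{2/J}) while ξ_J(1 − ακ/(1−κ)) → ∞, so σ_J²(α) = Θ(α^{2/J} / ξ_J(1 − ακ/(1−κ))) → 0, i.e. achieving smaller distortion with the joint thresholding estimator requires a vanishing effective noise power. -/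

import Mathlib

/-!
The ball `{u : ∑ⱼ uⱼ² ≤ J t}` contains the cube `[-√t, √t]ᴶ` and lies in the cube
`[-√(J t), √(J t)]ᴶ`; since the Gaussian density is at most `1/√(2π)` everywhere and at least
`e^{-1/2}/√(2π)` on `[-1, 1]`, the normalized chi-square CDF is squeezed between constant multiples
of `t^{J/2}` for `t ≤ 1`, and inverting gives `ξ_J(p) = Θ(p^{2/J})` as `p → 0`.
Gaussian and Lebesgue measure on `ℝᴶ` are mutually absolutely continuous. Hence spheres are
null, so the CDF is continuous, which makes `ξ_J` strictly increasing; and every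
`{∑ⱼ uⱼ² > c}` has positive mass, so the CDF stays below `1`, which forces `ξ_J(p) → ∞` as `p → 1`.
Thus `ξ_J(α) → 0` while `ξ_J(1 - ακ/(1-κ)) → ∞`, so the denominator of `σ_J²(α)` is eventually
between half of `ξ_J(1 - ακ/(1-κ))` and all of it, which gives the `Θ` bound and `σ_J²(α) → 0`.
-/

open MeasureTheory ProbabilityTheory Real Filter Finset Topology
open scoped ENNReal NNReal

noncomputable section

namespace Sparsity

/-- Binary entropy function (natural logarithms). -/
def Hb (p : ℝ) : ℝ := -(p * Real.log p) - (1 - p) * Real.log (1 - p)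

/-- The metric entropy rate `R(κ, α)`. -/
def Rrate (κ α : ℝ) : ℝ :=
  if α < 1 - κ then Hb κ - κ * Hb α - (1 - κ) * Hb (κ * α / (1 - κ)) else 0

/-- The standard gaussian measure on `ℝ`. -/
def stdGaussian : Measure ℝ := gaussianReal 0 1

instance : IsProbabilityMeasure stdGaussian := by unfold stdGaussian; infer_instance

/-- i.i.d. standard gaussian measure on `ι → ℝ`. -/
def gaussianPi (ι : Type*) [Fintype ι] : Measure (ι → ℝ) := Measure.pi fun _ => stdGaussian

instance (ι : Type*) [Fintype ι] : IsProbabilityMeasure (gaussianPi ι) := by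
  unfold gaussianPi; infer_instance

/-- CDF of a normalized chi-square with `J` degrees of freedom,
i.e. the law of `(1/J) ∑_{j<J} U_j^2` with `U_j` i.i.d. standard gaussian. -/
def chiCDF (J : ℕ) (t : ℝ) : ℝ :=
  ((gaussianPi (Fin J)) {u | ∑ j, (u j) ^ 2 ≤ J * t}).toReal

/-- Quantile function `ξ_J` of the normalized chi-square with `J` degrees of freedom. -/
def xi (J : ℕ) (p : ℝ) : ℝ := sInf {t : ℝ | 0 ≤ t ∧ p ≤ chiCDF J t}

/-- The diversity power `P_J(β) = ∫_0^β ξ_J(p) dp`. -/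
def Ppow (J : ℕ) (β : ℝ) : ℝ := ∫ p in (0:ℝ)..β, xi J p

/-- All sparsity patterns: size-`k` subsets of `{1,…,n}`. -/
def patterns (n k : ℕ) : Finset (Finset (Fin n)) := Finset.powersetCard k Finset.univ

/-- The underlying randomness for the joint sparsity model: nonzero values `ω.1`,
measurement matrices `ω.2.1`, and additive noise `ω.2.2`. -/
abbrev Omega (n m J : ℕ) : Type :=
  (Fin J → Fin n → ℝ) × (Fin J → Fin m → Fin n → ℝ) × (Fin J → Fin m → ℝ)

/-- The law of the randomness: everything i.i.d. standard gaussian. -/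
def omegaLaw (n m J : ℕ) : Measure (Omega n m J) :=
  (Measure.pi fun _ : Fin J => gaussianPi (Fin n)).prod
    ((Measure.pi fun _ : Fin J => Measure.pi fun _ : Fin m => gaussianPi (Fin n)).prod
      (Measure.pi fun _ : Fin J => gaussianPi (Fin m)))

/-- The sparse signal with pattern `S` and nonzero values `x`. -/
def signal (n : ℕ) (S : Finset (Fin n)) (x : Fin n → ℝ) : Fin n → ℝ :=
  fun i => if i ∈ S then x i else 0

/-- The noisy observations `Y_j = √(SNR/k)·A_j X_j + W_j`. -/
def Yobs (n m J : ℕ) (SNR : ℝ) (k : ℕ) (S : Finset (Fin n)) (ω : Omega n m J) :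
    Fin J → Fin m → ℝ :=
  fun j r =>
    Real.sqrt (SNR / k) * (∑ i, ω.2.1 j r i * signal n S (ω.1 j) i) + ω.2.2 j r

/-- Normalized distortion `d(S,T) = max(|S∖T|, |T∖S|)/k`. -/
def distor (k : ℕ) {n : ℕ} (S T : Finset (Fin n)) : ℝ :=
  (max (S \ T).card (T \ S).card : ℝ) / k

/-- A sparsity pattern estimator: a function of the observations `(Y_j)_j`
and of the measurement matrices `(A_j)_j`. -/
abbrev Estimator (n m J : ℕ) : Type :=
  (Fin J → Fin m → ℝ) → (Fin J → Fin m → Fin n → ℝ) → Finset (Fin n)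

/-- The probability that the estimator `est` makes distortion larger than `α`,
averaged over the uniformly distributed sparsity pattern. -/
def errProb (n m J k : ℕ) (SNR α : ℝ) (est : Estimator n m J) : ℝ :=
  (n.choose k : ℝ)⁻¹ * ∑ S ∈ patterns n k,
    (omegaLaw n m J
      {ω | α < distor k S (est (Yobs n m J SNR k S ω) ω.2.1)}).toReal

/-- Distortion `α` is achievable (by some estimator sequence) at sparsity rate `κ`,
signal-to-noise ratio `SNR`, total sampling rate `ρ` and diversity `J`. -/
def achievable (κ SNR ρ : ℝ) (J : ℕ) (α : ℝ) : Prop :=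
  ∃ (k m : ℕ → ℕ) (est : ∀ n, Estimator n (m n) J),
    Tendsto (fun n => (k n : ℝ) / n) atTop (𝓝 κ) ∧
    Tendsto (fun n => (J : ℝ) * (m n) / n) atTop (𝓝 ρ) ∧
    Tendsto (fun n => errProb n (m n) J (k n) SNR α (est n)) atTop (𝓝 0)

/-- The infimum total sampling rate at which distortion `α` is achievable. -/
def rhoStar (κ SNR : ℝ) (J : ℕ) (α : ℝ) : ℝ := sInf {ρ | achievable κ SNR ρ J α}

end Sparsity

namespace Sparsity

/-- The critical noise power `σ_J²(α) = ξ_J(α)/(ξ_J(1 − ακ/(1−κ)) − ξ_J(α))`. -/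
def sigmaSqCrit (J : ℕ) (κ α : ℝ) : ℝ :=
  xi J α / (xi J (1 - α * κ / (1 - κ)) - xi J α)

end Sparsity

lemma sq_rpow_natCast_div_two {y : ℝ} (hy : 0 ≤ y) (n : ℕ) : (y ^ 2) ^ ((n : ℝ) / 2) = y ^ n := by
  rw [← Real.rpow_natCast y 2, ← Real.rpow_mul hy, Nat.cast_ofNat, mul_div_cancel₀ _ two_ne_zero,
    Real.rpow_natCast]

lemma div_le_div_sub_self {x y : ℝ} (hx : 0 ≤ x) (hxy : x < y) : x / y ≤ x / (y - x) :=
  div_le_div_of_nonneg_left hx (sub_pos.2 hxy) (sub_le_self _ hx)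

lemma div_sub_self_le_two_mul_div {x y : ℝ} (hx : 0 ≤ x) (hxy : 2 * x ≤ y) (hy : 0 < y) :
    x / (y - x) ≤ 2 * x / y := by
  rw [div_le_div_iff₀ (by linarith) hy]
  nlinarith

lemma tendsto_one_sub_mul_div_nhdsGT_zero {a b : ℝ} (ha : 0 < a) (hb : 0 < b) :
    Tendsto (fun x : ℝ => 1 - x * a / b) (𝓝[>] 0) (𝓝[<] 1) := by
  refine tendsto_nhdsWithin_iff.2 ⟨?_, ?_⟩
  · have : Continuous fun x : ℝ => 1 - x * a / b := by fun_prop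
    simpa using (this.tendsto 0).mono_left nhdsWithin_le_nhds
  · filter_upwards [self_mem_nhdsWithin] with x (hx : 0 < x)
    simpa using (by positivity : 0 < x * a / b)

lemma tendsto_rpow_nhdsGT_zero {r : ℝ} (hr : 0 < r) :
    Tendsto (fun x : ℝ => x ^ r) (𝓝[>] 0) (𝓝 0) := by
  simpa [Real.zero_rpow hr.ne'] using
    (Real.continuousAt_rpow_const 0 r (Or.inr hr.le)).tendsto.mono_left nhdsWithin_le_nhds

namespace MeasureTheory.Measure

lemma absolutelyContinuous_pi_fin {α : Type*} [MeasurableSpace α] {μ ν : Measure α}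
    [SigmaFinite μ] [SigmaFinite ν] (h : μ ≪ ν) :
    ∀ n : ℕ, Measure.pi (fun _ : Fin n => μ) ≪ Measure.pi (fun _ : Fin n => ν)
  | 0 => by rw [Measure.pi_of_empty, Measure.pi_of_empty]
  | n + 1 => by
    rw [← ((measurePreserving_piFinSuccAbove (fun _ => μ) 0).symm _).map_eq,
      ← ((measurePreserving_piFinSuccAbove (fun _ => ν) 0).symm _).map_eq]
    exact (h.prod (absolutelyContinuous_pi_fin h n)).map (MeasurableEquiv.measurable _)

end MeasureTheory.Measure

namespace ProbabilityTheory

lemma continuous_cdf (μ : Measure ℝ) [IsProbabilityMeasure μ] [NullSingletonClass μ] :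
    Continuous (cdf μ) := by
  refine continuous_iff_continuousAt.2 fun x => ?_
  have hleft : Function.leftLim (cdf μ) x = cdf μ x := by
    have h := (cdf μ).measure_singleton x
    rw [measure_cdf, measure_singleton, eq_comm, ENNReal.ofReal_eq_zero, sub_nonpos] at h
    exact le_antisymm ((monotone_cdf μ).leftLim_le le_rfl) h
  rw [(monotone_cdf μ).continuousAt_iff_leftLim_eq_rightLim, hleft, (cdf μ).rightLim_eq]

end ProbabilityTheory

namespace Sparsity

lemma stdGaussian_apply (s : Set ℝ) :
    stdGaussian s = ∫⁻ x in s, ENNReal.ofReal ((√(2 * π))⁻¹ * exp (-x ^ 2 / 2)) := by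
  simp [stdGaussian, gaussianReal_apply 0 one_ne_zero, gaussianPDF, gaussianPDFReal]

lemma stdGaussian_Icc_le (b : ℝ) :
    stdGaussian (Set.Icc (-b) b) ≤ ENNReal.ofReal (2 * b / √(2 * π)) := by
  calc stdGaussian (Set.Icc (-b) b)
      ≤ ∫⁻ _ in Set.Icc (-b) b, ENNReal.ofReal (√(2 * π))⁻¹ := by
        rw [stdGaussian_apply]
        refine lintegral_mono fun x => ENNReal.ofReal_le_ofReal ?_
        exact mul_le_of_le_one_right (by positivity) (exp_le_one_iff.2 (by nlinarith))
    _ = ENNReal.ofReal (2 * b / √(2 * π)) := by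
        rw [setLIntegral_const, Real.volume_Icc, ← ENNReal.ofReal_mul (by positivity)]
        ring_nf

lemma le_stdGaussian_Icc (b : ℝ) :
    ENNReal.ofReal (2 * b / √(2 * π) * exp (-b ^ 2 / 2)) ≤ stdGaussian (Set.Icc (-b) b) := by
  calc ENNReal.ofReal (2 * b / √(2 * π) * exp (-b ^ 2 / 2))
      = ∫⁻ _ in Set.Icc (-b) b, ENNReal.ofReal ((√(2 * π))⁻¹ * exp (-b ^ 2 / 2)) := by
        rw [setLIntegral_const, Real.volume_Icc, ← ENNReal.ofReal_mul (by positivity)]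
        ring_nf
    _ ≤ stdGaussian (Set.Icc (-b) b) := by
        rw [stdGaussian_apply]
        refine setLIntegral_mono (by fun_prop) fun x hx => ENNReal.ofReal_le_ofReal ?_
        have : x ^ 2 ≤ b ^ 2 := sq_le_sq' hx.1 hx.2
        gcongr

lemma gaussianPi_univ_pi {J : ℕ} (s : Set ℝ) :
    gaussianPi (Fin J) (Set.univ.pi fun _ => s) = stdGaussian s ^ J := by
  simp [gaussianPi, Measure.pi_pi]

lemma gaussianPi_absolutelyContinuous (J : ℕ) : gaussianPi (Fin J) ≪ volume := by
  rw [volume_pi]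
  exact Measure.absolutelyContinuous_pi_fin
    (gaussianReal_absolutelyContinuous 0 one_ne_zero) J

lemma volume_absolutelyContinuous_gaussianPi (J : ℕ) : volume ≪ gaussianPi (Fin J) := by
  rw [volume_pi]
  exact Measure.absolutelyContinuous_pi_fin
    (gaussianReal_absolutelyContinuous' 0 one_ne_zero) J

lemma volume_sum_sq_eq {J : ℕ} (hJ : 0 < J) (c : ℝ) :
    volume {u : Fin J → ℝ | ∑ j, u j ^ 2 = c} = 0 := by
  have : Nonempty (Fin J) := ⟨⟨0, hJ⟩⟩
  refine measure_mono_null (t := WithLp.toLp 2 ⁻¹' Metric.sphere 0 √c) (fun u hu => ?_) ?_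
  · simp_all [EuclideanSpace.norm_eq]
  · rw [(PiLp.volume_preserving_toLp (Fin J)).measure_preimage
      Metric.isClosed_sphere.measurableSet.nullMeasurableSet]
    exact Measure.addHaar_sphere _ _ _

def chiSqLaw (J : ℕ) : Measure ℝ := (gaussianPi (Fin J)).map fun u => ∑ j, u j ^ 2

instance (J : ℕ) : IsProbabilityMeasure (chiSqLaw J) :=
  Measure.isProbabilityMeasure_map (Measurable.aemeasurable (by fun_prop))

lemma nullSingletonClass_chiSqLaw {J : ℕ} (hJ : 0 < J) : NullSingletonClass (chiSqLaw J) :=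
  ⟨fun c => by
    rw [chiSqLaw, Measure.map_apply (by fun_prop) (measurableSet_singleton c)]
    exact gaussianPi_absolutelyContinuous J (volume_sum_sq_eq hJ c)⟩

lemma chiCDF_eq_cdf (J : ℕ) (t : ℝ) : chiCDF J t = cdf (chiSqLaw J) (J * t) := by
  rw [cdf_eq_real, chiSqLaw, measureReal_def, Measure.map_apply (by fun_prop) measurableSet_Iic]
  rfl

lemma monotone_chiCDF (J : ℕ) : Monotone (chiCDF J) := by
  simp only [Monotone, chiCDF_eq_cdf]
  exact fun s t hst => monotone_cdf _ (by gcongr)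

lemma continuous_chiCDF {J : ℕ} (hJ : 0 < J) : Continuous (chiCDF J) := by
  have := nullSingletonClass_chiSqLaw hJ
  simp only [funext (chiCDF_eq_cdf J)]
  exact (continuous_cdf _).comp (continuous_const_mul _)

lemma tendsto_chiCDF_atTop {J : ℕ} (hJ : 0 < J) : Tendsto (chiCDF J) atTop (𝓝 1) := by
  simp only [funext (chiCDF_eq_cdf J)]
  exact (tendsto_cdf_atTop _).comp (tendsto_id.const_mul_atTop (by exact_mod_cast hJ))

lemma chiCDF_lt_one {J : ℕ} (hJ : 0 < J) (t : ℝ) : chiCDF J t < 1 := by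
  set S := {u : Fin J → ℝ | ∑ j, u j ^ 2 ≤ J * t}
  have hclosed : IsClosed S := isClosed_le (by fun_prop) (by fun_prop)
  have hne : Sᶜ.Nonempty := by
    refine ⟨fun _ => |t| + 1, ?_⟩
    have : t < (|t| + 1) ^ 2 := by nlinarith [abs_nonneg t, le_abs_self t]
    simpa [S] using mul_lt_mul_of_pos_left this (by exact_mod_cast hJ : (0 : ℝ) < J)
  have hpos : 0 < gaussianPi (Fin J) Sᶜ := pos_iff_ne_zero.2 fun h0 =>
    (hclosed.isOpen_compl.measure_pos volume hne).ne' (volume_absolutelyContinuous_gaussianPi J h0)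
  have hcompl := measureReal_compl (μ := gaussianPi (Fin J)) hclosed.measurableSet
  rw [probReal_univ] at hcompl
  have : 0 < (gaussianPi (Fin J)).real Sᶜ := ENNReal.toReal_pos hpos.ne' (measure_ne_top _ _)
  rw [chiCDF, ← measureReal_def]
  linarith

lemma chiCDF_le_rpow (J : ℕ) {t : ℝ} (ht : 0 ≤ t) :
    chiCDF J t ≤ (2 * J * t / π) ^ ((J : ℝ) / 2) := by
  have hbox : {u : Fin J → ℝ | ∑ j, u j ^ 2 ≤ J * t} ⊆
      Set.univ.pi fun _ => Set.Icc (-√(J * t)) √(J * t) := fun u hu j _ =>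
    abs_le.1 (Real.abs_le_sqrt ((Finset.single_le_sum (fun i _ => sq_nonneg (u i))
      (Finset.mem_univ j)).trans hu))
  have hmeas : gaussianPi (Fin J) {u | ∑ j, u j ^ 2 ≤ J * t} ≤
      ENNReal.ofReal ((2 * √(J * t) / √(2 * π)) ^ J) := by
    rw [ENNReal.ofReal_pow (by positivity)]
    exact (measure_mono hbox).trans ((gaussianPi_univ_pi _).trans_le
      (pow_le_pow_left' (stdGaussian_Icc_le _) J))
  have hbase : (2 * √(J * t) / √(2 * π)) ^ 2 = 2 * J * t / π := by
    rw [div_pow, mul_pow, Real.sq_sqrt (by positivity), Real.sq_sqrt (by positivity)]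
    field_simp
  rw [← hbase, sq_rpow_natCast_div_two (by positivity)]
  exact ENNReal.toReal_le_of_le_ofReal (by positivity) hmeas

lemma rpow_le_chiCDF (J : ℕ) {t : ℝ} (ht₀ : 0 ≤ t) (ht₁ : t ≤ 1) :
    (2 * t / (π * exp 1)) ^ ((J : ℝ) / 2) ≤ chiCDF J t := by
  have hbox : (Set.univ.pi fun _ => Set.Icc (-√t) √t) ⊆
      {u : Fin J → ℝ | ∑ j, u j ^ 2 ≤ J * t} := fun u hu => by
    have hsq : ∀ j, u j ^ 2 ≤ t := fun j =>
      (sq_le_sq' (hu j trivial).1 (hu j trivial).2).trans (Real.sq_sqrt ht₀).le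
    simpa using Finset.sum_le_sum fun j (_ : j ∈ Finset.univ) => hsq j
  have hmeas : ENNReal.ofReal ((2 * √t / √(2 * π) * exp (-1 / 2)) ^ J) ≤
      gaussianPi (Fin J) {u | ∑ j, u j ^ 2 ≤ J * t} := by
    have hexp : exp (-1 / 2) ≤ exp (-√t ^ 2 / 2) := by
      rw [Real.sq_sqrt ht₀]; gcongr
    rw [ENNReal.ofReal_pow (by positivity)]
    refine le_trans ?_ ((gaussianPi_univ_pi _).symm.trans_le (measure_mono hbox))
    gcongr
    exact (ENNReal.ofReal_le_ofReal (by gcongr)).trans (le_stdGaussian_Icc _)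
  have hbase : (2 * √t / √(2 * π) * exp (-1 / 2)) ^ 2 = 2 * t / (π * exp 1) := by
    have hexp_sq : exp (-1 / 2) ^ 2 = (exp 1)⁻¹ := by
      rw [← Real.exp_nat_mul, ← Real.exp_neg]
      norm_num
    rw [mul_pow, div_pow, mul_pow, Real.sq_sqrt ht₀, Real.sq_sqrt (by positivity), hexp_sq]
    field_simp
  rw [← hbase, sq_rpow_natCast_div_two (by positivity)]
  exact (ENNReal.ofReal_le_iff_le_toReal (measure_ne_top _ _)).1 hmeas

lemma xi_le {J : ℕ} {p t : ℝ} (ht : 0 ≤ t) (h : p ≤ chiCDF J t) : xi J p ≤ t :=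
  csInf_le ⟨0, fun _ hs => hs.1⟩ ⟨ht, h⟩

lemma xi_set_nonempty {J : ℕ} (hJ : 0 < J) {p : ℝ} (hp : p < 1) :
    {t : ℝ | 0 ≤ t ∧ p ≤ chiCDF J t}.Nonempty :=
  (((tendsto_chiCDF_atTop hJ).eventually (eventually_ge_nhds hp)).and
    (eventually_ge_atTop 0)).exists.imp fun _ h => ⟨h.2, h.1⟩

lemma le_xi {J : ℕ} (hJ : 0 < J) {p s : ℝ} (hp : p < 1)
    (h : ∀ t, 0 ≤ t → p ≤ chiCDF J t → s ≤ t) : s ≤ xi J p :=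
  le_csInf (xi_set_nonempty hJ hp) fun t ht => h t ht.1 ht.2

lemma le_chiCDF_xi {J : ℕ} (hJ : 0 < J) {p : ℝ} (hp : p < 1) : p ≤ chiCDF J (xi J p) :=
  ((isClosed_Ici.inter (isClosed_le continuous_const (continuous_chiCDF hJ))).csInf_mem
    (xi_set_nonempty hJ hp) ⟨0, fun _ hs => hs.1⟩).2

lemma mul_rpow_le_xi {J : ℕ} (hJ : 0 < J) {p : ℝ} (hp₀ : 0 ≤ p) (hp₁ : p < 1) :
    π / (2 * J) * p ^ ((2 : ℝ) / J) ≤ xi J p := by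
  refine le_xi hJ hp₁ fun t ht hpt => ?_
  have hJ' : (0 : ℝ) < J := by exact_mod_cast hJ
  have h := Real.rpow_le_rpow hp₀ (hpt.trans (chiCDF_le_rpow J ht))
    (by positivity : 0 ≤ (2 : ℝ) / J)
  rw [← inv_div, Real.rpow_rpow_inv (by positivity) (by positivity), inv_div,
    le_div_iff₀ Real.pi_pos] at h
  rw [div_mul_eq_mul_div, div_le_iff₀ (by positivity)]
  linarith

lemma xi_pos {J : ℕ} (hJ : 0 < J) {p : ℝ} (hp₀ : 0 < p) (hp₁ : p < 1) : 0 < xi J p := by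
  have hJ' : (0 : ℝ) < J := by exact_mod_cast hJ
  exact (by positivity : 0 < π / (2 * J) * p ^ ((2 : ℝ) / J)).trans_le
    (mul_rpow_le_xi hJ hp₀.le hp₁)

lemma xi_le_mul_rpow {J : ℕ} (hJ : 0 < J) {p : ℝ} (hp₀ : 0 ≤ p)
    (hp : p ^ ((2 : ℝ) / J) ≤ 2 / (π * exp 1)) :
    xi J p ≤ π * exp 1 / 2 * p ^ ((2 : ℝ) / J) := by
  have hJ' : (0 : ℝ) < J := by exact_mod_cast hJ
  refine xi_le (by positivity) ?_
  have ht₁ : π * exp 1 / 2 * p ^ ((2 : ℝ) / J) ≤ 1 := by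
    rwa [div_mul_eq_mul_div, div_le_one two_pos, ← le_div_iff₀' (by positivity)]
  refine le_trans (le_of_eq ?_) (rpow_le_chiCDF J (by positivity) ht₁)
  rw [show 2 * (π * exp 1 / 2 * p ^ ((2 : ℝ) / J)) / (π * exp 1) = p ^ ((2 : ℝ) / J) by
    field_simp, ← inv_div, Real.rpow_inv_rpow hp₀ (by positivity)]

lemma xi_lt_xi {J : ℕ} (hJ : 0 < J) {p q : ℝ} (hp : 0 < p) (hpq : p < q) (hq : q < 1) :
    xi J p < xi J q := by
  have hnear : ∀ᶠ s in 𝓝[<] xi J q, p < chiCDF J s ∧ s ∈ Set.Ioo 0 (xi J q) :=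
    ((continuous_chiCDF hJ).continuousAt.continuousWithinAt.eventually
      (eventually_gt_nhds (hpq.trans_le (le_chiCDF_xi hJ hq)))).and
      (Ioo_mem_nhdsLT (xi_pos hJ (hp.trans hpq) hq))
  obtain ⟨s, hps, hs₀, hsq⟩ := hnear.exists
  exact (xi_le hs₀.le hps.le).trans_lt hsq

lemma tendsto_xi_atTop {J : ℕ} (hJ : 0 < J) : Tendsto (xi J) (𝓝[<] 1) atTop := by
  refine tendsto_atTop.2 fun M => ?_
  filter_upwards [Ioo_mem_nhdsLT (chiCDF_lt_one hJ M)] with p hp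
  refine le_xi hJ hp.2 fun t _ hpt => ?_
  by_contra! htM
  exact (hp.1.trans_le hpt).not_ge (monotone_chiCDF J htM.le)

lemma eventually_xi_bounds {J : ℕ} (hJ : 0 < J) {β : ℝ → ℝ}
    (hβ : Tendsto (fun α => xi J (β α)) (𝓝[>] 0) atTop) :
    ∀ᶠ α in 𝓝[>] (0 : ℝ),
      (π / (2 * J) * α ^ ((2 : ℝ) / J) ≤ xi J α ∧ xi J α ≤ π * exp 1 * α ^ ((2 : ℝ) / J)) ∧
      (π / (2 * J) * (α ^ ((2 : ℝ) / J) / xi J (β α)) ≤ xi J α / (xi J (β α) - xi J α) ∧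
        xi J α / (xi J (β α) - xi J α) ≤ π * exp 1 * (α ^ ((2 : ℝ) / J) / xi J (β α))) := by
  have hJ' : (0 : ℝ) < J := by exact_mod_cast hJ
  filter_upwards [Ioo_mem_nhdsGT one_pos, hβ.eventually_ge_atTop 2,
    (tendsto_rpow_nhdsGT_zero (by positivity : (0 : ℝ) < 2 / J)).eventually
      (eventually_le_nhds (by positivity : 0 < 2 / (π * exp 1)))] with α hα hξβ hαpow
  have hlow := mul_rpow_le_xi hJ hα.1.le hα.2
  have hup := xi_le_mul_rpow hJ hα.1.le hαpow
  have hξα := xi_pos hJ hα.1 hα.2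
  have htwice : 2 * xi J α ≤ xi J (β α) := by
    rw [le_div_iff₀' (by positivity)] at hαpow
    linarith
  refine ⟨⟨hlow, hup.trans (by nlinarith [Real.pi_pos, Real.exp_pos 1])⟩, ?_, ?_⟩
  · calc π / (2 * J) * (α ^ ((2 : ℝ) / J) / xi J (β α))
        = π / (2 * J) * α ^ ((2 : ℝ) / J) / xi J (β α) := by ring
      _ ≤ xi J α / xi J (β α) := by gcongr
      _ ≤ xi J α / (xi J (β α) - xi J α) := div_le_div_sub_self hξα.le (by linarith)
  · calc xi J α / (xi J (β α) - xi J α) ≤ 2 * xi J α / xi J (β α) :=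
          div_sub_self_le_two_mul_div hξα.le htwice (by linarith)
      _ ≤ 2 * (π * exp 1 / 2 * α ^ ((2 : ℝ) / J)) / xi J (β α) := by gcongr
      _ = π * exp 1 * (α ^ ((2 : ℝ) / J) / xi J (β α)) := by ring

/-- **Monotonicity and limiting behavior of the thresholding noise level.**
`σ_J²(α)` is finite and strictly positive on the relevant range, tends to `0` as
`α → 0⁺`, and for small `α`, `ξ_J(α) = Θ(α^{2/J})` while `ξ_J(1 − ακ/(1−κ)) → ∞`, so
that `σ_J²(α) = Θ(α^{2/J}/ξ_J(1 − ακ/(1−κ))) → 0`. -/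
theorem thresholding_noise_level_behavior
    (κ : ℝ) (J : ℕ) (hκ : κ ∈ Set.Ioo 0 (1/2)) (hJ : 1 ≤ J) :
    (∀ α ∈ Set.Ioo (0:ℝ) 1, α < 1 - α * κ / (1 - κ) →
      0 < xi J (1 - α * κ / (1 - κ)) - xi J α ∧ 0 < sigmaSqCrit J κ α) ∧
    Tendsto (fun α : ℝ => sigmaSqCrit J κ α) (𝓝[>] 0) (𝓝 0) ∧
    Tendsto (fun α : ℝ => xi J (1 - α * κ / (1 - κ))) (𝓝[>] 0) atTop ∧
    ∃ c C : ℝ, 0 < c ∧ c ≤ C ∧ ∀ᶠ α in 𝓝[>] (0:ℝ),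
      (c * α ^ ((2:ℝ) / J) ≤ xi J α ∧ xi J α ≤ C * α ^ ((2:ℝ) / J)) ∧
      (c * (α ^ ((2:ℝ) / J) / xi J (1 - α * κ / (1 - κ))) ≤ sigmaSqCrit J κ α ∧
        sigmaSqCrit J κ α ≤ C * (α ^ ((2:ℝ) / J) / xi J (1 - α * κ / (1 - κ)))) := by
  obtain ⟨hκ₀, hκ₁⟩ := hκ
  have hJ' : (1 : ℝ) ≤ J := by exact_mod_cast hJ
  have hκ' : 0 < 1 - κ := by linarith
  have hβ := tendsto_one_sub_mul_div_nhdsGT_zero hκ₀ hκ'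
  have hξβ := (tendsto_xi_atTop hJ).comp hβ
  have hbounds := eventually_xi_bounds hJ hξβ
  refine ⟨fun α hα hαβ => ?_, ?_, hξβ, π / (2 * J), π * exp 1, by positivity, ?_, hbounds⟩
  · have hβ₁ : 1 - α * κ / (1 - κ) < 1 := by
      have := div_pos (mul_pos hα.1 hκ₀) hκ'
      linarith
    have hlt := xi_lt_xi hJ hα.1 hαβ hβ₁
    exact ⟨sub_pos.2 hlt, div_pos (xi_pos hJ hα.1 hα.2) (sub_pos.2 hlt)⟩
  · have hratio := (tendsto_rpow_nhdsGT_zero (by positivity : (0 : ℝ) < 2 / J)).div_atTop hξβ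
    exact tendsto_of_tendsto_of_tendsto_of_le_of_le'
      (by simpa using hratio.const_mul (π / (2 * J))) (by simpa using hratio.const_mul (π * exp 1))
      (hbounds.mono fun _ h => h.2.1) (hbounds.mono fun _ h => h.2.2)
  · calc π / (2 * J) ≤ π := div_le_self Real.pi_pos.le (by linarith)
      _ ≤ π * exp 1 := le_mul_of_one_le_right Real.pi_pos.le (Real.one_le_exp zero_le_one)

end Sparsity
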